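/- Let ℛ and 𝒮 be linear growing TRSs over 𝓕 and let 𝒟'(ℛ,𝒮) be the powerset-pair automaton built from 𝒞'_{RS_{𝒮°}}(ℛ). For every s ∈ 𝒯(𝓕): if s →_{Γ_{𝒟'}}* [S,P] and P ⊆ Q_f, then for every redex position p of s, s[(s|_p)°]_p ∈ (→_ℛ*)[RS_{𝒮°}], i.e., s[(s|_p)°]_p rewrites in ℛ to a root-stable term of 𝒮°. -/

import Mathlib

set_option maxHeartbeats 1000000

/-! ## Terms over a signature -/

/-- Terms over a signature given by a type `F` of function symbols together with
an arity function `ar`; variables are natural numbers. -/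
inductive Term (F : Type) (ar : F → ℕ) : Type
  | var : ℕ → Term F ar
  | app : (f : F) → (Fin (ar f) → Term F ar) → Term F ar

namespace Term

variable {F : Type} {ar : F → ℕ}

/-- The (finite) set of variables of a term. -/
def vars : Term F ar → Finset ℕ
  | var n => {n}
  | app _ ts => Finset.univ.biUnion fun i => (ts i).vars

/-- A term is ground if it contains no variables. -/
def Ground (t : Term F ar) : Prop := t.vars = ∅

/-- The number of occurrences of the variable `n` in a term. -/
def count (n : ℕ) : Term F ar → ℕ
  | var m => if m = n then 1 else 0
  | app _ ts => ∑ i, (ts i).count n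

/-- A term is linear if no variable occurs twice in it. -/
def Linear (t : Term F ar) : Prop := ∀ n, t.count n ≤ 1

/-- Applying a substitution to a term. -/
def subst (σ : ℕ → Term F ar) : Term F ar → Term F ar
  | var n => σ n
  | app f ts => app f fun i => (ts i).subst σ

/-- The subterm at a position (a list of argument indices), if the position is valid. -/
def subtermAt : Term F ar → List ℕ → Option (Term F ar)
  | t, [] => some t
  | var _, _ :: _ => none
  | app f ts, i :: p => if h : i < ar f then (ts ⟨i, h⟩).subtermAt p else none

/-- Replacing the subterm at a position, if the position is valid. -/
def replaceAt : Term F ar → List ℕ → Term F ar → Option (Term F ar)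
  | _, [], u => some u
  | var _, _ :: _, _ => none
  | app f ts, i :: p, u =>
      if h : i < ar f then
        ((ts ⟨i, h⟩).replaceAt p u).map fun s => app f (Function.update ts ⟨i, h⟩ s)
      else none

/-- `s.IsSubtermOf t` : `s` is a subterm of `t`. -/
def IsSubtermOf (s t : Term F ar) : Prop := ∃ p, t.subtermAt p = some s

/-- Relabelling of function symbols along an arity-preserving map of signatures. -/
def relabel {G : Type} {arG : G → ℕ} (φ : F → G) (h : ∀ f, arG (φ f) = ar f) :
    Term F ar → Term G arG
  | var n => var n
  | app f ts => app (φ f) fun i => (ts (Fin.cast (h f) i)).relabel φ h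

end Term

/-! ## Rewriting -/

/-- One-step rewriting with a set of rewrite rules: there are a position `p` of `s`,
a rule `(l, r)` and a substitution `σ` with `s|_p = lσ` and `t = s[rσ]_p`. -/
def Rewrites {F : Type} {ar : F → ℕ} (R : Set (Term F ar × Term F ar))
    (s t : Term F ar) : Prop :=
  ∃ (p : List ℕ) (l r : Term F ar) (σ : ℕ → Term F ar),
    (l, r) ∈ R ∧ s.subtermAt p = some (l.subst σ) ∧ s.replaceAt p (r.subst σ) = some t

/-- Many-step rewriting (reflexive–transitive closure). -/
abbrev RewritesStar {F : Type} {ar : F → ℕ} (R : Set (Term F ar × Term F ar)) :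
    Term F ar → Term F ar → Prop :=
  Relation.ReflTransGen (Rewrites R)

/-- A term rewriting system: a finite set of rules whose left-hand sides are not variables. -/
structure TRS (F : Type) (ar : F → ℕ) where
  rules : Set (Term F ar × Term F ar)
  finite : rules.Finite
  lhs_not_var : ∀ lr ∈ rules, ∀ n, lr.1 ≠ Term.var n

namespace TRS

variable {F : Type} {ar : F → ℕ}

def LeftLinear (R : TRS F ar) : Prop := ∀ lr ∈ R.rules, lr.1.Linear

def RightLinear (R : TRS F ar) : Prop := ∀ lr ∈ R.rules, lr.2.Linear

/-- A TRS is linear if all left- and right-hand sides are linear terms. -/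
def IsLinear (R : TRS F ar) : Prop := R.LeftLinear ∧ R.RightLinear

/-- A TRS is growing if every variable occurring both in the left- and the right-hand
side of a rule occurs at depth 1 in the left-hand side. -/
def Growing (R : TRS F ar) : Prop :=
  ∀ lr ∈ R.rules, ∀ n ∈ lr.1.vars, n ∈ lr.2.vars →
    ∀ (f : F) (ts : Fin (ar f) → Term F ar), lr.1 = Term.app f ts →
      ∀ i, n ∈ (ts i).vars → ts i = Term.var n

/-- A redex is an instance of a left-hand side. -/
def IsRedex (R : TRS F ar) (s : Term F ar) : Prop :=
  ∃ lr ∈ R.rules, ∃ σ : ℕ → Term F ar, s = lr.1.subst σ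

/-- `p` is a redex position of `s`. -/
def RedexPos (R : TRS F ar) (s : Term F ar) (p : List ℕ) : Prop :=
  ∃ u, s.subtermAt p = some u ∧ R.IsRedex u

def Reducible (R : TRS F ar) (s : Term F ar) : Prop := ∃ p, R.RedexPos s p

/-- A term is root-stable if it cannot be rewritten to a redex. -/
def RootStable (R : TRS F ar) (s : Term F ar) : Prop :=
  ¬ ∃ t, RewritesStar R.rules s t ∧ R.IsRedex t

/-- Ground normal forms. -/
def NFset (R : TRS F ar) : Set (Term F ar) := { t | t.Ground ∧ ¬ R.Reducible t }

/-- Ground redexes. -/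
def RedexSet (R : TRS F ar) : Set (Term F ar) := { t | t.Ground ∧ R.IsRedex t }

/-- Root-stable ground terms. -/
def RSset (R : TRS F ar) : Set (Term F ar) := { t | t.Ground ∧ R.RootStable t }

/-- Relabelling a TRS along an arity-preserving map of signatures. -/
def relabel {G : Type} {arG : G → ℕ} (R : TRS F ar) (φ : F → G)
    (h : ∀ f, arG (φ f) = ar f) : TRS G arG where
  rules := (fun lr => (lr.1.relabel φ h, lr.2.relabel φ h)) '' R.rules
  finite := R.finite.image _
  lhs_not_var := by
    rintro lr ⟨lr0, h0, rfl⟩ n hn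
    dsimp only at hn
    cases h1 : lr0.1 with
    | var m => exact absurd h1 (R.lhs_not_var lr0 h0 m)
    | app f ts =>
        rw [h1] at hn
        simp only [Term.relabel] at hn
        nomatch hn

end TRS

/-! ## Tree automata -/

/-- A transition rule `f(q₁,…,qₙ) → q` of a bottom-up tree automaton. -/
abbrev TARule (F : Type) (ar : F → ℕ) (Q : Type) : Type :=
  (f : F) × ((Fin (ar f) → Q) × Q)

/-- A (finite bottom-up) tree automaton without ε-transitions. -/
structure TreeAutomaton (F : Type) (ar : F → ℕ) (Q : Type) where
  trans : Set (TARule F ar Q)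
  final : Set Q

/-- `Reaches Δ t q` : the ground term `t` rewrites to the state `q` using the
transition rules `Δ`. -/
inductive Reaches {F : Type} {ar : F → ℕ} {Q : Type} (Δ : Set (TARule F ar Q)) :
    Term F ar → Q → Prop
  | app {f : F} {ts : Fin (ar f) → Term F ar} {qs : Fin (ar f) → Q} {q : Q} :
      (∀ i, Reaches Δ (ts i) (qs i)) → (⟨f, qs, q⟩ : TARule F ar Q) ∈ Δ →
      Reaches Δ (Term.app f ts) q

/-- `ReachesT Δ θ t q` : the term `t`, whose variables are interpreted as the states
given by `θ`, rewrites to the state `q` using the transition rules `Δ`. -/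
inductive ReachesT {F : Type} {ar : F → ℕ} {Q : Type} (Δ : Set (TARule F ar Q))
    (θ : ℕ → Q) : Term F ar → Q → Prop
  | var (n : ℕ) : ReachesT Δ θ (Term.var n) (θ n)
  | app {f : F} {ts : Fin (ar f) → Term F ar} {qs : Fin (ar f) → Q} {q : Q} :
      (∀ i, ReachesT Δ θ (ts i) (qs i)) → (⟨f, qs, q⟩ : TARule F ar Q) ∈ Δ →
      ReachesT Δ θ (Term.app f ts) q

/-- The language of a tree automaton: all ground terms reaching a final state. -/
def Lang {F : Type} {ar : F → ℕ} {Q : Type} (A : TreeAutomaton F ar Q) :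
    Set (Term F ar) :=
  { t | t.Ground ∧ ∃ q ∈ A.final, Reaches A.trans t q }

/-- A set of ground terms is recognizable if it is the language of some finite
tree automaton. -/
def Recognizable {F : Type} {ar : F → ℕ} (T : Set (Term F ar)) : Prop :=
  ∃ (Q : Type) (_ : Fintype Q) (A : TreeAutomaton F ar Q), T = Lang A

/-- The set of states occurring in a set of transition rules. -/
def statesOf {F : Type} {ar : F → ℕ} {Q : Type} (Γ : Set (TARule F ar Q)) : Set Q :=
  { q | ∃ ρ ∈ Γ, ρ.2.2 = q ∨ ∃ i, ρ.2.1 i = q }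

/-! ## The automaton `ℬ(ℛ)` -/

/-- The canonical representative of the state `⟨t⟩` of `ℬ(ℛ)`: all variables are
identified with the single state `⟨x⟩`, represented by `var 0`. -/
def stPattern {F : Type} {ar : F → ℕ} : Term F ar → Term F ar
  | Term.var _ => Term.var 0
  | Term.app f ts => Term.app f ts

/-- `S_ℛ`: the set of all subterms of arguments of left-hand sides of `ℛ`. -/
def SR {F : Type} {ar : F → ℕ} (R : TRS F ar) : Set (Term F ar) :=
  { s | ∃ lr ∈ R.rules, ∃ (f : F) (ts : Fin (ar f) → Term F ar),
        lr.1 = Term.app f ts ∧ ∃ i, s.IsSubtermOf (ts i) }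

/-- The representatives of the states of `ℬ(ℛ)`: the patterns of terms of `S_ℛ`,
together with `⟨x⟩`. -/
def BStateSet {F : Type} {ar : F → ℕ} (R : TRS F ar) : Set (Term F ar) :=
  stPattern '' SR R ∪ {Term.var 0}

/-- The matching rules of `ℬ(ℛ)` (with states encoded by `enc`):
`f(⟨t₁⟩,…,⟨tₙ⟩) → ⟨t⟩` for every `t = f(t₁,…,tₙ) ∈ S_ℛ`. -/
def BMatch {F : Type} {ar : F → ℕ} {Q : Type} (R : TRS F ar) (enc : Term F ar → Q) :
    Set (TARule F ar Q) :=
  { ρ | ∃ (f : F) (ts : Fin (ar f) → Term F ar), Term.app f ts ∈ SR R ∧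
        ρ = ⟨f, fun i => enc (stPattern (ts i)), enc (Term.app f ts)⟩ }

/-- The propagation rules `f(⟨x⟩,…,⟨x⟩) → ⟨x⟩` for every function symbol `f`. -/
def BProp {F : Type} {ar : F → ℕ} {Q : Type} (enc : Term F ar → Q) :
    Set (TARule F ar Q) :=
  { ρ | ∃ f : F, ρ = ⟨f, fun _ => enc (Term.var 0), enc (Term.var 0)⟩ }

/-- The transition rules of the automaton `ℬ(ℛ)`. -/
def BTrans {F : Type} {ar : F → ℕ} {Q : Type} (R : TRS F ar) (enc : Term F ar → Q) :
    Set (TARule F ar Q) :=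
  BMatch R enc ∪ BProp enc

/-- `Σ(t)`: the set of ground instances of the term `t`. -/
def GInst {F : Type} {ar : F → ℕ} (t : Term F ar) : Set (Term F ar) :=
  { s | s.Ground ∧ ∃ σ, s = t.subst σ }

/-! ## Saturation -/

/-- The state `qᵢ` associated to the argument `lᵢ` of a left-hand side in the
saturation rule: `lᵢθ` if `lᵢ` is a variable occurring in `r` (whose variable set
is `rv`), and `⟨lᵢ⟩` otherwise. -/
def satArg {F : Type} {ar : F → ℕ} {Q : Type} (enc : Term F ar → Q) (θ : ℕ → Q)
    (rv : Finset ℕ) : Term F ar → Q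
  | Term.var n => if n ∈ rv then θ n else enc (Term.var 0)
  | Term.app f ts => enc (Term.app f ts)

/-- One step of the saturation process: add all transition rules `f(q₁,…,qₙ) → q`
obtained from a rewrite rule `f(l₁,…,lₙ) → r` and a state substitution `θ`
(with values among the states `Qc` of the automaton) such that `rθ →_Γ* q`. -/
def satStep {F : Type} {ar : F → ℕ} {Q : Type} (R : TRS F ar) (enc : Term F ar → Q)
    (Qc : Set Q) (Γ : Set (TARule F ar Q)) : Set (TARule F ar Q) :=
  Γ ∪ { ρ | ∃ (f : F) (ls : Fin (ar f) → Term F ar) (r : Term F ar) (θ : ℕ → Q) (q : Q),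
        (Term.app f ls, r) ∈ R.rules ∧ (∀ n ∈ r.vars, θ n ∈ Qc) ∧ ReachesT Γ θ r q ∧
        ρ = ⟨f, fun i => satArg enc θ r.vars (ls i), q⟩ }

/-- The saturated set of transition rules: the closure of `Γ0` under the saturation
inference rule. -/
def satGamma {F : Type} {ar : F → ℕ} {Q : Type} (R : TRS F ar) (enc : Term F ar → Q)
    (Qc : Set Q) (Γ0 : Set (TARule F ar Q)) : Set (TARule F ar Q) :=
  ⋃ n, (satStep R enc Qc)^[n] Γ0

/-! ## The automaton `𝒞_T(ℛ)` and its extension `𝒞'_T(ℛ)` -/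

/-- The data of the construction of the automaton `𝒞_T(ℛ)`: an automaton `𝒜_T`
recognizing `T` with all states accessible and state set `QA`, together with an
encoding `enc` of the states `⟨t⟩` of `ℬ(ℛ)` into the common state type `Q`, such
that every state common to `𝒜_T` and `ℬ(ℛ)` accepts the same set of terms in both
automata. -/
structure CSetup {G : Type} [Fintype G] {arG : G → ℕ} (Q : Type) [Fintype Q]
    (Rg : TRS G arG) (T : Set (Term G arG)) where
  enc : Term G arG → Q
  A : TreeAutomaton G arG Q
  QA : Set Q
  henc : Set.InjOn enc (BStateSet Rg)
  hAstates : ∀ ρ ∈ A.trans, ρ.2.2 ∈ QA ∧ ∀ i, ρ.2.1 i ∈ QA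
  hfinal : A.final ⊆ QA
  hacc : ∀ q ∈ QA, ∃ s : Term G arG, s.Ground ∧ Reaches A.trans s q
  hground : ∃ s : Term G arG, s.Ground
  hshared : ∀ q ∈ QA ∩ enc '' BStateSet Rg, ∀ s : Term G arG,
      Reaches A.trans s q ↔ Reaches (BTrans Rg enc) s q
  hT : T = Lang A

namespace CSetup

variable {G : Type} [Fintype G] {arG : G → ℕ} {Q : Type} [Fintype Q]
  {Rg : TRS G arG} {T : Set (Term G arG)}

/-- The set of states of the automaton `𝒞_T(ℛ)`. -/
def Qstates (C : CSetup Q Rg T) : Set Q := C.QA ∪ C.enc '' BStateSet Rg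

/-- The transition rules of `𝒞_T(ℛ)` before saturation: the union of `𝒜_T` and `ℬ(ℛ)`. -/
def Γ0 (C : CSetup Q Rg T) : Set (TARule G arG Q) := C.A.trans ∪ BTrans Rg C.enc

/-- The transition rules of `𝒞_T(ℛ)` after saturation. -/
def Γsat (C : CSetup Q Rg T) : Set (TARule G arG Q) :=
  satGamma Rg C.enc C.Qstates C.Γ0

end CSetup

/-- The redex rules `f(⟪l₁⟫,…,⟪lₙ⟫) → q_r` for every left-hand side `f(l₁,…,lₙ)`. -/
def RedexRules {F : Type} {ar : F → ℕ} {Q : Type} (R : TRS F ar)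
    (enc2 : Term F ar → Q) (qr : Q) : Set (TARule F ar Q) :=
  { ρ | ∃ (f : F) (ls : Fin (ar f) → Term F ar) (r : Term F ar),
        (Term.app f ls, r) ∈ R.rules ∧
        ρ = ⟨f, fun i => enc2 (stPattern (ls i)), qr⟩ }

/-- The rules `f(⟨x⟩,…,q_r,…,⟨x⟩) → q_r`. -/
def QrProp {F : Type} {ar : F → ℕ} {Q : Type} (enc : Term F ar → Q) (qr : Q) :
    Set (TARule F ar Q) :=
  { ρ | ∃ (f : F) (j : Fin (ar f)),
        ρ = ⟨f, fun i => if i = j then qr else enc (Term.var 0), qr⟩ }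

/-- The data of the construction of the automaton `𝒞'_T(ℛ)`: `𝒞_T(ℛ)` extended with
a fresh copy `⟪t⟫` (encoded by `enc2`, with `⟪x⟫ = ⟨x⟩`) of the states of `ℬ(ℛ)` and
a fresh state `q_r`. -/
structure CpSetup {G : Type} [Fintype G] {arG : G → ℕ} (Q : Type) [Fintype Q]
    (Rg : TRS G arG) (T : Set (Term G arG)) extends CSetup Q Rg T where
  enc2 : Term G arG → Q
  qr : Q
  henc2 : Set.InjOn enc2 (BStateSet Rg)
  hx : enc2 (Term.var 0) = enc (Term.var 0)
  hfresh : (enc2 '' (BStateSet Rg \ {Term.var 0}) ∪ {qr}) ∩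
              (QA ∪ enc '' BStateSet Rg) = ∅
  hqr : qr ∉ enc2 '' (BStateSet Rg \ {Term.var 0})

namespace CpSetup

variable {G : Type} [Fintype G] {arG : G → ℕ} {Q : Type} [Fintype Q]
  {Rg : TRS G arG} {T : Set (Term G arG)}

/-- The transition rules `Γ'` of the automaton `𝒞'_T(ℛ)`. -/
def Γ' (C : CpSetup Q Rg T) : Set (TARule G arG Q) :=
  C.toCSetup.Γsat ∪ BMatch Rg C.enc2 ∪ RedexRules Rg C.enc2 C.qr ∪ QrProp C.enc C.qr

end CpSetup

/-! ## The signature `𝓖 = 𝓕 ∪ {•}` -/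

/-- The arity function of the extended signature `𝓕 ∪ {•}` (with `•` the fresh
constant `none`). -/
def arB {F : Type} (ar : F → ℕ) : Option F → ℕ
  | none => 0
  | some f => ar f

/-- The term `•`. -/
def bulletTm {F : Type} {ar : F → ℕ} : Term (Option F) (arB ar) :=
  Term.app none Fin.elim0

/-- The embedding of `𝒯(𝓕)`-terms into terms over `𝓕 ∪ {•}`. -/
def liftB {F : Type} {ar : F → ℕ} : Term F ar → Term (Option F) (arB ar) :=
  Term.relabel some (fun _ => rfl)

/-- A TRS over `𝓕` viewed as a TRS over `𝓕 ∪ {•}`. -/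
def TRS.liftB {F : Type} {ar : F → ℕ} (R : TRS F ar) : TRS (Option F) (arB ar) :=
  R.relabel some (fun _ => rfl)

/-- The TRS `ℛ• = ℛ ∪ {• → •}` over the signature `𝓕 ∪ {•}`. -/
def TRS.bullet {F : Type} {ar : F → ℕ} (R : TRS F ar) : TRS (Option F) (arB ar) where
  rules := R.liftB.rules ∪ {(bulletTm, bulletTm)}
  finite := R.liftB.finite.union (Set.finite_singleton _)
  lhs_not_var := by
    rintro lr (h | h) n hn
    · exact R.liftB.lhs_not_var lr h n hn
    · rw [Set.mem_singleton_iff] at h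
      rw [h] at hn
      simp [bulletTm] at hn

/-! ## The automaton `𝒟(ℛ)` -/

/-- For a symbol `g` and sets of states `Ss` for the arguments, the set
`g(S₁,…,Sₙ)↓` of states reachable from `g` applied to states chosen from the `Ssᵢ`. -/
def oneStep {G : Type} {arG : G → ℕ} {Q : Type} (Γ : Set (TARule G arG Q)) (g : G)
    (Ss : Fin (arG g) → Set Q) : Set Q :=
  { q | ∃ qs : Fin (arG g) → Q, (∀ i, qs i ∈ Ss i) ∧ (⟨g, qs, q⟩ : TARule G arG Q) ∈ Γ }

/-- `t↓` for a ground term `t`: the set of states reachable from `t`. -/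
def dn {G : Type} {arG : G → ℕ} {Q : Type} (Γ : Set (TARule G arG Q))
    (t : Term G arG) : Set Q :=
  { q | Reaches Γ t q }

/-- There is a rewrite rule with left-hand side `g(l₁,…,lₙ)` such that
`⟪lᵢ⟫ ∈ Ssᵢ` for all `i`. -/
def LhsMatch {G : Type} {arG : G → ℕ} {Q : Type} (Rg : TRS G arG)
    (enc2 : Term G arG → Q) (g : G) (Ss : Fin (arG g) → Set Q) : Prop :=
  ∃ (ls : Fin (arG g) → Term G arG) (r : Term G arG),
    (Term.app g ls, r) ∈ Rg.rules ∧ ∀ i, enc2 (stPattern (ls i)) ∈ Ss i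

/-- The transition rules of the automaton `𝒟(ℛ)` over `𝓕`, built from the transition
rules `Γ'` of `𝒞'_{NF}(ℛ)` over `𝓕 ∪ {•}`. -/
def DTrans {F : Type} {ar : F → ℕ} {Q : Type} (Rb : TRS (Option F) (arB ar))
    (Γ' : Set (TARule (Option F) (arB ar) Q))
    (enc enc2 : Term (Option F) (arB ar) → Q) :
    Set (TARule F ar (Set Q × Set Q)) :=
  { ρ | ∃ (f : F) (SP : Fin (ar f) → Set Q × Set Q) (P1 P2 : Set Q),
      P1 ⊆ (⋃ i : Fin (ar f), oneStep Γ' (some f)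
              (fun j => @ite _ (j = i) (instDecidableEqFin (ar f) j i) (SP j).2 (SP j).1)) ∧
      (∀ (i : Fin (ar f)), ∀ q ∈ (SP i).2,
        (P1 ∩ oneStep Γ' (some f) (fun j => @ite _ (j = i) (instDecidableEqFin (ar f) j i) {q} (SP j).1)).Nonempty) ∧
      ((LhsMatch Rb enc2 (some f) (fun i => (SP i).1) ∧ P2 = {enc (Term.var 0)}) ∨
       (¬ LhsMatch Rb enc2 (some f) (fun i => (SP i).1) ∧ P2 = (∅ : Set Q))) ∧
      ρ = ⟨f, SP, (oneStep Γ' (some f) (fun i => (SP i).1), P1 ∪ P2)⟩ }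

/-- The automaton `𝒟(ℛ)`: final states are the pairs `[S,P]` with `q_r ∈ S` and
`P ⊆ Q_f`. -/
def DAutomaton {F : Type} {ar : F → ℕ} {Q : Type} (Rb : TRS (Option F) (arB ar))
    (Γ' : Set (TARule (Option F) (arB ar) Q))
    (enc enc2 : Term (Option F) (arB ar) → Q) (qr : Q) (Qf : Set Q) :
    TreeAutomaton F ar (Set Q × Set Q) where
  trans := DTrans Rb Γ' enc enc2
  final := { SP | qr ∈ SP.1 ∧ SP.2 ⊆ Qf }

/-! ## Growing approximations -/

/-- `VarRepl t t'` : `t'` is obtained from `t` by replacing occurrences of variables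
by (possibly other) variables. -/
inductive VarRepl {F : Type} {ar : F → ℕ} : Term F ar → Term F ar → Prop
  | var (n m : ℕ) : VarRepl (Term.var n) (Term.var m)
  | app (f : F) (ts ts' : Fin (ar f) → Term F ar) :
      (∀ i, VarRepl (ts i) (ts' i)) → VarRepl (Term.app f ts) (Term.app f ts')

/-- `Rg` is a growing approximation of `R`: a right-linear growing TRS obtained from
`R` by replacing, in each right-hand side, occurrences of variables by variables not
occurring in the corresponding left-hand side. -/
def IsGrowingApprox {F : Type} {ar : F → ℕ} (R Rg : TRS F ar) : Prop :=
  Rg.RightLinear ∧ Rg.Growing ∧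
  (∀ lr ∈ Rg.rules, ∃ lr' ∈ R.rules, lr.1 = lr'.1 ∧ VarRepl lr'.2 lr.2 ∧
      ∀ n ∈ lr.2.vars, n ∉ lr.1.vars) ∧
  (∀ lr ∈ R.rules, ∃ lr' ∈ Rg.rules, lr.1 = lr'.1 ∧ VarRepl lr.2 lr'.2 ∧
      ∀ n ∈ lr'.2.vars, n ∉ lr'.1.vars)

/-! ## The signature `𝓖 = 𝓕 ∪ {f° : f ∈ 𝓕}` -/

/-- The arity function of the signature `𝓕 ∪ {f° : f ∈ 𝓕}` (`inl f` is `f`,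
`inr f` is `f°`). -/
def arC {F : Type} (ar : F → ℕ) : F ⊕ F → ℕ
  | Sum.inl f => ar f
  | Sum.inr f => ar f

/-- The embedding of `𝒯(𝓕)`-terms into terms over `𝓕 ∪ {f° : f ∈ 𝓕}`. -/
def liftC {F : Type} {ar : F → ℕ} : Term F ar → Term (F ⊕ F) (arC ar) :=
  Term.relabel Sum.inl (fun _ => rfl)

/-- `t°`: mark the root symbol of `t`. -/
def circTm {F : Type} {ar : F → ℕ} : Term F ar → Term (F ⊕ F) (arC ar)
  | Term.var n => Term.var n
  | Term.app f ts => Term.app (Sum.inr f) fun i => liftC (ts i)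

/-- A TRS over `𝓕` viewed as a TRS over `𝓕 ∪ {f° : f ∈ 𝓕}`. -/
def TRS.liftC {F : Type} {ar : F → ℕ} (R : TRS F ar) : TRS (F ⊕ F) (arC ar) :=
  R.relabel Sum.inl (fun _ => rfl)

/-- The TRS `𝒮° = 𝒮 ∪ {l° → r | l → r ∈ 𝒮}` over the signature `𝓕 ∪ {f° : f ∈ 𝓕}`. -/
def TRS.circ {F : Type} {ar : F → ℕ} (S : TRS F ar) : TRS (F ⊕ F) (arC ar) where
  rules := S.liftC.rules ∪ (fun lr => (circTm lr.1, _root_.liftC lr.2)) '' S.rules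
  finite := S.liftC.finite.union (S.finite.image _)
  lhs_not_var := by
    rintro lr (h | ⟨lr0, h0, rfl⟩) n hn
    · exact S.liftC.lhs_not_var lr h n hn
    · dsimp only at hn
      cases h1 : lr0.1 with
      | var m => exact absurd h1 (S.lhs_not_var lr0 h0 m)
      | app f ts =>
          rw [h1] at hn
          simp only [circTm] at hn
          nomatch hn

/-- The transitions added to `ℬ(𝒮°)` to obtain `𝒜_{REDEX_{𝒮°}}`:
`f(⟨l₁⟩,…,⟨lₙ⟩) → q_f` and `f°(⟨l₁⟩,…,⟨lₙ⟩) → q_f` for each left-hand side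
`f(l₁,…,lₙ)` of a rule of `𝒮`. -/
def CircRedexRules {F : Type} {ar : F → ℕ} {Q : Type} (S : TRS F ar)
    (enc : Term (F ⊕ F) (arC ar) → Q) (qf : Q) : Set (TARule (F ⊕ F) (arC ar) Q) :=
  { ρ | ∃ (f : F) (ls : Fin (ar f) → Term F ar) (r : Term F ar),
      (Term.app f ls, r) ∈ S.rules ∧
      (ρ = ⟨Sum.inl f, fun i => enc (stPattern (liftC (ls i))), qf⟩ ∨
       ρ = ⟨Sum.inr f, fun i => enc (stPattern (liftC (ls i))), qf⟩) }

/-! ## The automaton `𝒟'(ℛ,𝒮)` -/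

/-- The data of the construction of `𝒞'_{RS_{𝒮°}}(ℛ)`: the saturated automaton
`𝒞_{RS_{𝒮°}}(ℛ)`, a fresh copy `⟪t⟫` (encoded by `enc2`, with `⟪x⟫ = ⟨x⟩`) of the
states of `ℬ(ℛ)`, and an automaton `𝒞_{REDEX_𝒮}(𝒮)` (transitions `Etrans`, final
states `Qf'`) recognizing the non-`𝒮`-root-stable ground terms of `𝒯(𝓕)`. -/
structure CrsSetup {F : Type} [Fintype F] {ar : F → ℕ} (Q : Type) [Fintype Q]
    (R S : TRS F ar) extends CSetup Q R.liftC (TRS.RSset S.circ) where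
  enc2 : Term (F ⊕ F) (arC ar) → Q
  henc2 : Set.InjOn enc2 (BStateSet R.liftC)
  hx : enc2 (Term.var 0) = enc (Term.var 0)
  hfresh2 : (enc2 '' (BStateSet R.liftC \ {Term.var 0})) ∩
              (QA ∪ enc '' BStateSet R.liftC) = ∅
  Etrans : Set (TARule (F ⊕ F) (arC ar) Q)
  Qf' : Set Q
  hQf' : Qf' ⊆ statesOf Etrans
  hEfresh : statesOf Etrans ∩
      (QA ∪ enc '' BStateSet R.liftC ∪ enc2 '' (BStateSet R.liftC \ {Term.var 0})) = ∅
  hE : ∀ t : Term (F ⊕ F) (arC ar),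
      (t.Ground ∧ ∃ q ∈ Qf', Reaches Etrans t q) ↔
      (∃ s : Term F ar, t = liftC s ∧ s.Ground ∧ ¬ S.RootStable s)

namespace CrsSetup

variable {F : Type} [Fintype F] {ar : F → ℕ} {Q : Type} [Fintype Q] {R S : TRS F ar}

/-- The transition rules `Γ'` of the automaton `𝒞'_{RS_{𝒮°}}(ℛ)`. -/
def Γ' (C : CrsSetup Q R S) : Set (TARule (F ⊕ F) (arC ar) Q) :=
  C.toCSetup.Γsat ∪ BMatch R.liftC C.enc2 ∪ C.Etrans

end CrsSetup

/-- The transition rules of the automaton `𝒟'(ℛ,𝒮)` over `𝓕`, built from the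
transition rules `Γ'` of `𝒞'_{RS_{𝒮°}}(ℛ)`. -/
def DTransRS {F : Type} {ar : F → ℕ} {Q : Type} (Rg : TRS (F ⊕ F) (arC ar))
    (Γ' : Set (TARule (F ⊕ F) (arC ar) Q)) (enc2 : Term (F ⊕ F) (arC ar) → Q) :
    Set (TARule F ar (Set Q × Set Q)) :=
  { ρ | ∃ (f : F) (SP : Fin (ar f) → Set Q × Set Q) (P1 P2 : Set Q),
      P1 ⊆ (⋃ i : Fin (ar f), oneStep Γ' (Sum.inl f)
              (fun j => @ite _ (j = i) (instDecidableEqFin (ar f) j i) (SP j).2 (SP j).1)) ∧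
      (∀ (i : Fin (ar f)), ∀ q ∈ (SP i).2,
        (P1 ∩ oneStep Γ' (Sum.inl f) (fun j => @ite _ (j = i) (instDecidableEqFin (ar f) j i) {q} (SP j).1)).Nonempty) ∧
      ((LhsMatch Rg enc2 (Sum.inl f) (fun i => (SP i).1) ∧ P2.Nonempty ∧
          P2 ⊆ oneStep Γ' (Sum.inr f) (fun i => (SP i).1)) ∨
       (¬ LhsMatch Rg enc2 (Sum.inl f) (fun i => (SP i).1) ∧ P2 = (∅ : Set Q))) ∧
      ρ = ⟨f, SP, (oneStep Γ' (Sum.inl f) (fun i => (SP i).1), P1 ∪ P2)⟩ }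

/-- The automaton `𝒟'(ℛ,𝒮)`: final states are the pairs `[S,P]` with
`S ∩ Q_f' ≠ ∅` and `P ⊆ Q_f`. -/
def DAutomatonRS {F : Type} {ar : F → ℕ} {Q : Type} (Rg : TRS (F ⊕ F) (arC ar))
    (Γ' : Set (TARule (F ⊕ F) (arC ar) Q)) (enc2 : Term (F ⊕ F) (arC ar) → Q)
    (Qf' Qf : Set Q) : TreeAutomaton F ar (Set Q × Set Q) where
  trans := DTransRS Rg Γ' enc2
  final := { SP | (SP.1 ∩ Qf').Nonempty ∧ SP.2 ⊆ Qf }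

/-! The run of `𝒟'(ℛ,𝒮)` on `s` records in its first component the set of states of `𝒞'`
reached by `s`, and in its second component states reached by the marked terms
`s[(s|_p)°]_p`: at a redex position the marked symbol `f°` fires on the states `⟪lᵢ⟫`, and above
it the covering condition on `P¹` carries a state through every context. Hence each
`s[(s|_p)°]_p` reaches some `q ∈ P ⊆ Q_f` in `𝒞'`. The states added to `𝒞_{RS_{𝒮°}}(ℛ)` are
fresh, so this run already lives in the saturated automaton, and for linear growing `ℛ` every
saturation transition is mirrored by an `ℛ`-step: the run unfolds into an `ℛ`-rewrite sequence
ending in a term accepted by `𝒜_{RS_{𝒮°}}`, i.e. a root-stable term of `𝒮°`. -/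

namespace Term

variable {F : Type} {ar : F → ℕ}

lemma mem_vars_app {f : F} {ts : Fin (ar f) → Term F ar} {n : ℕ} :
    n ∈ (app f ts).vars ↔ ∃ i, n ∈ (ts i).vars := by
  simp [vars]

lemma ground_app_iff {f : F} {ts : Fin (ar f) → Term F ar} :
    (app f ts).Ground ↔ ∀ i, (ts i).Ground := by
  simp only [Ground, Finset.eq_empty_iff_forall_notMem, mem_vars_app]
  exact ⟨fun h i n hn => h n ⟨i, hn⟩, fun h n ⟨i, hn⟩ => h i n hn⟩

lemma ground_subst {σ : ℕ → Term F ar} (hσ : ∀ n, (σ n).Ground) :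
    ∀ t : Term F ar, (t.subst σ).Ground
  | var n => hσ n
  | app _ ts => ground_app_iff.2 fun i => ground_subst hσ (ts i)

lemma mem_vars_iff_count_ne_zero {n : ℕ} {t : Term F ar} : n ∈ t.vars ↔ t.count n ≠ 0 := by
  induction t with
  | var m =>
      simp only [vars, count, Finset.mem_singleton]
      split_ifs <;> omega
  | app f ts ih => simp [mem_vars_app, count, Finset.sum_eq_zero_iff, ih]

lemma count_le_of_subtermAt {n : ℕ} :
    ∀ {p : List ℕ} {t u : Term F ar}, t.subtermAt p = some u → u.count n ≤ t.count n
  | [], t, u, h => by simp only [subtermAt, Option.some.injEq] at h; rw [h]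
  | i :: p, var _, _, h => by simp [subtermAt] at h
  | i :: p, app f ts, u, h => by
      simp only [subtermAt] at h
      split_ifs at h with hi
      exact (count_le_of_subtermAt h).trans
        (Finset.single_le_sum (fun j _ => Nat.zero_le ((ts j).count n)) (Finset.mem_univ _))

lemma Linear.of_subtermAt {p : List ℕ} {t u : Term F ar} (hl : t.Linear)
    (h : t.subtermAt p = some u) : u.Linear :=
  fun n => (count_le_of_subtermAt h).trans (hl n)

lemma Linear.eq_of_mem_vars {f : F} {ts : Fin (ar f) → Term F ar} (hl : (app f ts).Linear)
    {n : ℕ} {i j : Fin (ar f)} (hi : n ∈ (ts i).vars) (hj : n ∈ (ts j).vars) : i = j := by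
  by_contra hij
  have hpair : (ts i).count n + (ts j).count n ≤ ∑ k, (ts k).count n := by
    rw [← Finset.sum_pair (f := fun k => (ts k).count n) hij]
    exact Finset.sum_le_sum_of_subset (Finset.subset_univ _)
  have := hl n
  rw [count] at this
  have := mem_vars_iff_count_ne_zero.1 hi
  have := mem_vars_iff_count_ne_zero.1 hj
  omega

lemma subtermAt_append (t : Term F ar) :
    ∀ p q : List ℕ, t.subtermAt (p ++ q) = (t.subtermAt p).bind (·.subtermAt q) := by
  induction t with
  | var m => rintro (_ | _) q <;> simp [subtermAt]
  | app f ts ih =>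
      rintro (_ | ⟨i, p⟩) q
      · simp [subtermAt]
      · simp only [List.cons_append, subtermAt]
        split_ifs <;> simp [ih]

lemma exists_lt_of_subtermAt_cons {f : F} {ts : Fin (ar f) → Term F ar} {i : ℕ} {p : List ℕ}
    {u : Term F ar} (h : (app f ts).subtermAt (i :: p) = some u) :
    ∃ hi : i < ar f, (ts ⟨i, hi⟩).subtermAt p = some u := by
  simp only [subtermAt] at h
  split_ifs at h with hi
  exact ⟨hi, h⟩

lemma replaceAt_cons_of_lt {f : F} (ts : Fin (ar f) → Term F ar) {i : ℕ} (hi : i < ar f)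
    (p : List ℕ) (w : Term F ar) :
    (app f ts).replaceAt (i :: p) w =
      ((ts ⟨i, hi⟩).replaceAt p w).map fun s => app f (Function.update ts ⟨i, hi⟩ s) := by
  simp [replaceAt, hi]

lemma subst_congr {t : Term F ar} {σ σ' : ℕ → Term F ar}
    (h : ∀ n ∈ t.vars, σ n = σ' n) : t.subst σ = t.subst σ' := by
  induction t with
  | var n => exact h n (by simp [vars])
  | app f ts ih =>
      simp only [subst, app.injEq, heq_eq_eq, true_and]
      exact funext fun i => ih i fun n hn => h n (mem_vars_app.2 ⟨i, hn⟩)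

lemma exists_subst_of_linear {f : F} {ls ts : Fin (ar f) → Term F ar}
    (hl : (app f ls).Linear) (h : ∀ i, ∃ σ, ts i = (ls i).subst σ) :
    ∃ σ, ∀ i, ts i = (ls i).subst σ := by
  classical
  choose σs hσs using h
  refine ⟨fun n => if hn : ∃ i, n ∈ (ls i).vars then σs hn.choose n else var n, fun i => ?_⟩
  rw [hσs i]
  refine subst_congr fun n hn => ?_
  have hex : ∃ j, n ∈ (ls j).vars := ⟨i, hn⟩
  rw [dif_pos hex, hl.eq_of_mem_vars hex.choose_spec hn]

variable {G : Type} {arG : G → ℕ} {φ : F → G} {hφ : ∀ f, arG (φ f) = ar f}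

lemma count_relabel {n : ℕ} (t : Term F ar) : (t.relabel φ hφ).count n = t.count n := by
  induction t with
  | var m => rfl
  | app f ts ih =>
      simp only [relabel, count]
      exact Fintype.sum_equiv (finCongr (hφ f)) _ _ fun i => ih _

lemma mem_vars_relabel {n : ℕ} {t : Term F ar} : n ∈ (t.relabel φ hφ).vars ↔ n ∈ t.vars := by
  rw [mem_vars_iff_count_ne_zero, mem_vars_iff_count_ne_zero, count_relabel]

lemma Linear.relabel {t : Term F ar} (h : t.Linear) : (t.relabel φ hφ).Linear :=
  fun n => (count_relabel t).trans_le (h n)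

lemma Ground.relabel {t : Term F ar} (h : t.Ground) : (t.relabel φ hφ).Ground := by
  simp only [Ground, Finset.eq_empty_iff_forall_notMem, mem_vars_relabel] at h ⊢
  exact h

lemma subst_relabel (t : Term F ar) (σ : ℕ → Term F ar) :
    (t.subst σ).relabel φ hφ = (t.relabel φ hφ).subst fun n => (σ n).relabel φ hφ := by
  induction t with
  | var n => rfl
  | app f ts ih => simp only [subst, relabel, ih]

end Term

lemma liftC_app {F : Type} {ar : F → ℕ} (f : F) (ts : Fin (ar f) → Term F ar) :
    liftC (Term.app f ts) = Term.app (Sum.inl f) fun i => liftC (ts i) := rfl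

lemma liftC_subst {F : Type} {ar : F → ℕ} (t : Term F ar) (σ : ℕ → Term F ar) :
    liftC (t.subst σ) = (liftC t).subst fun n => liftC (σ n) :=
  Term.subst_relabel t σ

namespace TRS

variable {F : Type} {ar : F → ℕ} {G : Type} {arG : G → ℕ} {R : TRS F ar} {φ : F → G}
  {hφ : ∀ f, arG (φ f) = ar f}

lemma LeftLinear.relabel (hL : R.LeftLinear) : (R.relabel φ hφ).LeftLinear := by
  rintro lr ⟨lr₀, h₀, rfl⟩
  exact (hL lr₀ h₀).relabel

lemma Growing.relabel (hg : R.Growing) : (R.relabel φ hφ).Growing := by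
  rintro lr ⟨⟨l₀, r₀⟩, h₀, rfl⟩ n hnl hnr f ts hts i hni
  cases l₀ with
  | var m => exact absurd rfl (R.lhs_not_var _ h₀ m)
  | app g us =>
      simp only [Term.relabel, Term.app.injEq] at hts
      obtain ⟨rfl, hts⟩ := hts
      cases eq_of_heq hts
      have := hg _ h₀ n (Term.mem_vars_relabel.1 hnl) (Term.mem_vars_relabel.1 hnr) g us rfl
        (Fin.cast (hφ g) i) (Term.mem_vars_relabel.1 hni)
      simp only [this, Term.relabel]

end TRS

namespace Reaches

variable {G : Type} {arG : G → ℕ} {Q : Type} {Δ Δ' : Set (TARule G arG Q)}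
  {t : Term G arG} {q : Q}

lemma ground (h : Reaches Δ t q) : t.Ground := by
  induction h with
  | app _ _ ih => exact Term.ground_app_iff.2 ih

lemma mono (hΔ : Δ ⊆ Δ') (h : Reaches Δ t q) : Reaches Δ' t q := by
  induction h with
  | app _ hr ih => exact .app ih (hΔ hr)

lemma restrict {X : Set Q} (hΔ : ∀ ρ ∈ Δ, ρ.2.2 ∈ X → ρ ∈ Δ' ∧ ∀ i, ρ.2.1 i ∈ X)
    (h : Reaches Δ t q) (hq : q ∈ X) : Reaches Δ' t q := by
  induction h with
  | app _ hr ih =>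
      obtain ⟨hr', hsrc⟩ := hΔ _ hr hq
      exact .app (fun i => ih i (hsrc i)) hr'

lemma exists_of_iUnion {Δ : ℕ → Set (TARule G arG Q)} (hΔ : Monotone Δ)
    (h : Reaches (⋃ n, Δ n) t q) : ∃ n, Reaches (Δ n) t q := by
  induction h with
  | app _ hr ih =>
      choose ns hns using ih
      obtain ⟨n₀, hn₀⟩ := Set.mem_iUnion.1 hr
      obtain ⟨M, hM⟩ := Finite.exists_le ns
      exact ⟨max n₀ M, .app (fun i => (hns i).mono (hΔ ((hM i).trans (le_max_right _ _))))
        (hΔ (le_max_left _ _) hn₀)⟩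

end Reaches

section TreeAutomata

variable {G : Type} {arG : G → ℕ} {Q : Type}

lemma TARule.eq_of_mk_eq {f : G} {a b : Fin (arG f) → Q} {p q : Q}
    (h : (⟨f, a, p⟩ : TARule G arG Q) = ⟨f, b, q⟩) : a = b ∧ p = q := by
  simpa using h

lemma dn_app (Γ : Set (TARule G arG Q)) (g : G) (ts : Fin (arG g) → Term G arG) :
    dn Γ (Term.app g ts) = oneStep Γ g fun i => dn Γ (ts i) := by
  ext q
  constructor
  · rintro ⟨hts, hr⟩
    exact ⟨_, hts, hr⟩
  · rintro ⟨qs, hqs, hr⟩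
    exact .app hqs hr

lemma reaches_app_update {Γ : Set (TARule G arG Q)} {g : G}
    {ts : Fin (arG g) → Term G arG} {i : Fin (arG g)} {v : Term G arG} {q q' : Q}
    (hq' : q' ∈ oneStep Γ g fun j => if j = i then {q} else dn Γ (ts j))
    (hv : Reaches Γ v q) : Reaches Γ (Term.app g (Function.update ts i v)) q' := by
  obtain ⟨qs, hqs, hr⟩ := hq'
  refine .app (fun j => ?_) hr
  by_cases hj : j = i
  · subst hj
    have : qs j = q := by simpa using hqs j
    simpa [this] using hv
  · simpa [hj, dn] using hqs j

lemma ReachesT.subst {Γ : Set (TARule G arG Q)}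
    {θ : ℕ → Q} {r : Term G arG} {q : Q} (h : ReachesT Γ θ r q) {σ : ℕ → Term G arG}
    (hσ : ∀ n ∈ r.vars, Reaches Γ (σ n) (θ n)) : Reaches Γ (r.subst σ) q := by
  induction h with
  | var n => exact hσ n (by simp [Term.vars])
  | app _ hr ih => exact .app (fun i => ih i fun n hn => hσ n (Term.mem_vars_app.2 ⟨i, hn⟩)) hr

lemma ReachesT.target {Γ : Set (TARule G arG Q)}
    {θ : ℕ → Q} {r : Term G arG} {q : Q} (h : ReachesT Γ θ r q) :
    (∃ n ∈ r.vars, q = θ n) ∨ ∃ ρ ∈ Γ, ρ.2.2 = q := by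
  cases h with
  | var n => exact .inl ⟨n, by simp [Term.vars], rfl⟩
  | app _ hr => exact .inr ⟨_, hr, rfl⟩

end TreeAutomata

section Rewriting

variable {G : Type} {arG : G → ℕ} {Rl : Set (Term G arG × Term G arG)} {f : G}

lemma Rewrites.app_update (vs : Fin (arG f) → Term G arG) (i : Fin (arG f))
    {a b : Term G arG} (h : Rewrites Rl a b) :
    Rewrites Rl (Term.app f (Function.update vs i a)) (Term.app f (Function.update vs i b)) := by
  obtain ⟨p, l, r, σ, hlr, hsub, hrep⟩ := h
  refine ⟨i.1 :: p, l, r, σ, hlr, ?_, ?_⟩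
  · simpa [Term.subtermAt] using hsub
  · simp [Term.replaceAt, hrep]

lemma RewritesStar.app_update (vs : Fin (arG f) → Term G arG) (i : Fin (arG f))
    {a b : Term G arG} (h : RewritesStar Rl a b) :
    RewritesStar Rl (Term.app f (Function.update vs i a))
      (Term.app f (Function.update vs i b)) :=
  Relation.ReflTransGen.lift (fun x => Term.app f (Function.update vs i x))
    (fun _ _ => Rewrites.app_update vs i) _ _ h

lemma RewritesStar.app {vs ts : Fin (arG f) → Term G arG}
    (h : ∀ i, RewritesStar Rl (vs i) (ts i)) :
    RewritesStar Rl (Term.app f vs) (Term.app f ts) := by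
  classical
  suffices ∀ s : Finset (Fin (arG f)),
      RewritesStar Rl (Term.app f vs) (Term.app f (s.piecewise ts vs)) by
    simpa using this Finset.univ
  intro s
  induction s using Finset.induction with
  | empty => simpa using Relation.ReflTransGen.refl
  | insert j s hj ih =>
      have hfix : Function.update (s.piecewise ts vs) j (vs j) = s.piecewise ts vs :=
        Function.update_eq_self_iff.2 (Finset.piecewise_eq_of_notMem _ _ _ hj).symm
      have step := RewritesStar.app_update (s.piecewise ts vs) j (h j)
      rw [hfix, ← Finset.piecewise_insert] at step
      exact ih.trans step

end Rewriting

section Matching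

variable {G : Type} {arG : G → ℕ} {Q : Type} {Rg : TRS G arG}

lemma SR_arg {f : G} {ts : Fin (arG f) → Term G arG} (h : Term.app f ts ∈ SR Rg)
    (i : Fin (arG f)) : ts i ∈ SR Rg := by
  obtain ⟨lr, hlr, g, us, hg, j, p, hp⟩ := h
  exact ⟨lr, hlr, g, us, hg, j, p ++ [i.1], by simp [Term.subtermAt_append, hp, Term.subtermAt]⟩

lemma SR_lhs_arg {f : G} {ls : Fin (arG f) → Term G arG} {r : Term G arG}
    (h : (Term.app f ls, r) ∈ Rg.rules) (i : Fin (arG f)) : ls i ∈ SR Rg :=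
  ⟨_, h, f, ls, rfl, i, [], by simp [Term.subtermAt]⟩

lemma linear_of_mem_SR (hL : Rg.LeftLinear) {u : Term G arG} (h : u ∈ SR Rg) : u.Linear := by
  obtain ⟨lr, hlr, f, ts, hf, i, p, hp⟩ := h
  have hl := hL lr hlr
  rw [hf] at hl
  exact hl.of_subtermAt (p := i.1 :: p) (by simpa [Term.subtermAt] using hp)

lemma stPattern_mem_BStateSet {u : Term G arG} (h : u ∈ SR Rg) :
    stPattern u ∈ BStateSet Rg :=
  .inl ⟨u, h, rfl⟩

lemma var_zero_mem_BStateSet : (Term.var 0 : Term G arG) ∈ BStateSet Rg :=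
  .inr rfl

lemma states_mem_of_mem_BTrans {enc : Term G arG → Q} {ρ : TARule G arG Q}
    (h : ρ ∈ BTrans Rg enc) :
    ρ.2.2 ∈ enc '' BStateSet Rg ∧ ∀ i, ρ.2.1 i ∈ enc '' BStateSet Rg := by
  rcases h with ⟨f, ts, hts, rfl⟩ | ⟨f, rfl⟩
  · exact ⟨⟨_, stPattern_mem_BStateSet hts, rfl⟩,
      fun i => ⟨_, stPattern_mem_BStateSet (SR_arg hts i), rfl⟩⟩
  · exact ⟨⟨_, var_zero_mem_BStateSet, rfl⟩, fun _ => ⟨_, var_zero_mem_BStateSet, rfl⟩⟩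

lemma reaches_var_zero {Δ : Set (TARule G arG Q)} {e : Term G arG → Q} (hP : BProp e ⊆ Δ)
    {t : Term G arG} (ht : t.Ground) : Reaches Δ t (e (Term.var 0)) := by
  induction t with
  | var n => simp [Term.Ground, Term.vars] at ht
  | app f ts ih => exact .app (fun i => ih i (Term.ground_app_iff.1 ht i)) (hP ⟨f, rfl⟩)

lemma reaches_stPattern_subst {Δ : Set (TARule G arG Q)} {e₂ e : Term G arG → Q}
    (hM : BMatch Rg e₂ ⊆ Δ) (hP : BProp e ⊆ Δ) (hx : e₂ (Term.var 0) = e (Term.var 0))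
    {u : Term G arG} (hu : u ∈ SR Rg) {σ : ℕ → Term G arG} (hg : (u.subst σ).Ground) :
    Reaches Δ (u.subst σ) (e₂ (stPattern u)) := by
  induction u with
  | var n => rw [stPattern, hx]; exact reaches_var_zero hP hg
  | app f ts ih =>
      exact .app (fun i => ih i (SR_arg hu i) (Term.ground_app_iff.1 hg i)) (hM ⟨f, ts, hu, rfl⟩)

lemma exists_subst_of_reaches_BTrans {enc : Term G arG → Q}
    (henc : Set.InjOn enc (BStateSet Rg)) (hL : Rg.LeftLinear) {u : Term G arG}
    (hu : u ∈ SR Rg) {t : Term G arG}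
    (h : Reaches (BTrans Rg enc) t (enc (stPattern u))) : ∃ σ, t = u.subst σ := by
  induction u generalizing t with
  | var n => exact ⟨fun _ => t, rfl⟩
  | app f us ih =>
      obtain @⟨f', ts, _, _, hts, hr⟩ := h
      rcases hr with ⟨g, ws, hws, hρ⟩ | ⟨_, hρ⟩
      · have htgt := henc (stPattern_mem_BStateSet hu) (stPattern_mem_BStateSet hws)
          (congrArg (·.2.2) hρ)
        simp only [stPattern, Term.app.injEq] at htgt
        obtain ⟨rfl, hus⟩ := htgt
        cases eq_of_heq hus
        obtain ⟨rfl⟩ := congrArg Sigma.fst hρ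
        obtain ⟨rfl, -⟩ := TARule.eq_of_mk_eq hρ
        obtain ⟨σ, hσ⟩ := Term.exists_subst_of_linear (linear_of_mem_SR hL hu)
          fun i => ih i (SR_arg hu i) (hts i)
        exact ⟨σ, by simp [Term.subst, ← hσ]⟩
      · have := henc (stPattern_mem_BStateSet hu) var_zero_mem_BStateSet (congrArg (·.2.2) hρ)
        simp [stPattern] at this

end Matching

namespace CSetup

variable {G : Type} [Fintype G] {arG : G → ℕ} {Q : Type} [Fintype Q]
  {Rg : TRS G arG} {T : Set (Term G arG)} (C : CSetup Q Rg T)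

def satIter (n : ℕ) : Set (TARule G arG Q) := (satStep Rg C.enc C.Qstates)^[n] C.Γ0

lemma satIter_mono : Monotone C.satIter :=
  monotone_nat_of_le_succ fun n => by
    rw [satIter, satIter, Function.iterate_succ_apply']
    exact Set.subset_union_left

lemma Γ0_subset_satIter (n : ℕ) : C.Γ0 ⊆ C.satIter n :=
  C.satIter_mono (Nat.zero_le n)

lemma satArg_mem_Qstates {θ : ℕ → Q} {rv : Finset ℕ} (hθ : ∀ n ∈ rv, θ n ∈ C.Qstates)
    {l : Term G arG} (hl : l ∈ SR Rg) : satArg C.enc θ rv l ∈ C.Qstates := by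
  cases l with
  | var n =>
      rw [satArg]
      split_ifs with hn
      · exact hθ n hn
      · exact .inr ⟨_, var_zero_mem_BStateSet, rfl⟩
  | app g us => exact .inr ⟨_, stPattern_mem_BStateSet hl, rfl⟩

lemma states_mem_Qstates_of_mem_Γ0 {ρ : TARule G arG Q} (h : ρ ∈ C.Γ0) :
    ρ.2.2 ∈ C.Qstates ∧ ∀ i, ρ.2.1 i ∈ C.Qstates := by
  rcases h with hA | hB
  · exact ⟨.inl (C.hAstates ρ hA).1, fun i => .inl ((C.hAstates ρ hA).2 i)⟩
  · have hQ := states_mem_of_mem_BTrans hB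
    exact ⟨.inr hQ.1, fun i => .inr (hQ.2 i)⟩

lemma states_mem_Qstates_of_mem_satIter {n : ℕ} {ρ : TARule G arG Q} (hn : ρ ∈ C.satIter n) :
    ρ.2.2 ∈ C.Qstates ∧ ∀ i, ρ.2.1 i ∈ C.Qstates := by
  induction n generalizing ρ with
  | zero => exact C.states_mem_Qstates_of_mem_Γ0 hn
  | succ n ih =>
      rw [satIter, Function.iterate_succ_apply'] at hn
      rcases hn with hn | ⟨f, ls, r, θ, q, hR, hθ, hT, rfl⟩
      · exact ih hn
      · refine ⟨?_, fun i => C.satArg_mem_Qstates hθ (SR_lhs_arg hR i)⟩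
        rcases hT.target with ⟨m, hm, rfl⟩ | ⟨ρ', hρ', rfl⟩
        · exact hθ m hm
        · exact (ih hρ').1

lemma states_mem_Qstates_of_mem_Γsat {ρ : TARule G arG Q} (h : ρ ∈ C.Γsat) :
    ρ.2.2 ∈ C.Qstates ∧ ∀ i, ρ.2.1 i ∈ C.Qstates :=
  C.states_mem_Qstates_of_mem_satIter (Set.mem_iUnion.1 h).choose_spec

lemma reaches_of_reaches_Γ0 {t : Term G arG} {q : Q} (h : Reaches C.Γ0 t q) :
    (q ∈ C.QA → Reaches C.A.trans t q) ∧
      (q ∈ C.enc '' BStateSet Rg → Reaches (BTrans Rg C.enc) t q) := by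
  induction h with
  | @app f ts qs q _ hr ih =>
      rcases hr with hA | hB
      · have hQ := C.hAstates _ hA
        have hAr : Reaches C.A.trans (.app f ts) q := .app (fun i => (ih i).1 (hQ.2 i)) hA
        exact ⟨fun _ => hAr, fun hq => (C.hshared q ⟨hQ.1, hq⟩ _).1 hAr⟩
      · have hQ := states_mem_of_mem_BTrans hB
        have hBr : Reaches (BTrans Rg C.enc) (.app f ts) q := .app (fun i => (ih i).2 (hQ.2 i)) hB
        exact ⟨fun hqA => (C.hshared q ⟨hqA, hQ.1⟩ _).2 hBr, fun _ => hBr⟩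

lemma exists_reaches_Γ0_of_mem_Qstates {q : Q} (hq : q ∈ C.Qstates) :
    ∃ t, Reaches C.Γ0 t q := by
  obtain ⟨g₀, hg₀⟩ := C.hground
  have hM : BMatch Rg C.enc ⊆ C.Γ0 := fun _ h => .inr (.inl h)
  have hP : BProp C.enc ⊆ C.Γ0 := fun _ h => .inr (.inr h)
  rcases hq with hA | ⟨u, ⟨w, hw, rfl⟩ | rfl, rfl⟩
  · obtain ⟨t, -, ht⟩ := C.hacc q hA
    exact ⟨t, ht.mono Set.subset_union_left⟩
  · exact ⟨_, reaches_stPattern_subst hM hP rfl hw (σ := fun _ => g₀)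
      (Term.ground_subst (fun _ => hg₀) w)⟩
  · exact ⟨g₀, reaches_var_zero hP hg₀⟩

lemma exists_subst_of_reaches_satArg (hL : Rg.LeftLinear) {θ : ℕ → Q} {rv : Finset ℕ}
    {l : Term G arG} (hl : l ∈ SR Rg) {t : Term G arG}
    (h : Reaches C.Γ0 t (satArg C.enc θ rv l)) : ∃ σ, t = l.subst σ := by
  cases l with
  | var n => exact ⟨fun _ => t, rfl⟩
  | app g us =>
      exact exists_subst_of_reaches_BTrans C.henc hL hl
        ((C.reaches_of_reaches_Γ0 h).2 ⟨_, stPattern_mem_BStateSet hl, rfl⟩)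

def Sound (Γ : Set (TARule G arG Q)) : Prop :=
  ∀ ⦃v q⦄, Reaches Γ v q → ∃ t, RewritesStar Rg.rules v t ∧ Reaches C.Γ0 t q

/-- Since `ℛ` is growing, a variable `x` of `r` bound by the left-hand side is itself an argument
`lᵢ`, whose state is `qᵢ = θ x`; the other variables of `r` are instantiated by terms reaching
their states. -/
lemma exists_subst_of_satStep_rule (hL : Rg.LeftLinear) (hGrow : Rg.Growing)
    {Γ : Set (TARule G arG Q)} (hΓ0 : C.Γ0 ⊆ Γ) {f : G} {ls : Fin (arG f) → Term G arG}
    {r : Term G arG} (hR : (Term.app f ls, r) ∈ Rg.rules) {θ : ℕ → Q}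
    (hθ : ∀ n ∈ r.vars, θ n ∈ C.Qstates) {q : Q} (hT : ReachesT Γ θ r q)
    {ts : Fin (arG f) → Term G arG}
    (hts : ∀ i, Reaches C.Γ0 (ts i) (satArg C.enc θ r.vars (ls i))) :
    ∃ σ, (∀ i, ts i = (ls i).subst σ) ∧ Reaches Γ (r.subst σ) q := by
  classical
  obtain ⟨σ', hσ'⟩ := Term.exists_subst_of_linear (hL _ hR)
    fun i => C.exists_subst_of_reaches_satArg hL (SR_lhs_arg hR i) (hts i)
  have : Nonempty (Term G arG) := ⟨.var 0⟩
  choose! acc hacc using fun n (hn : n ∈ r.vars) =>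
    (C.exists_reaches_Γ0_of_mem_Qstates (hθ n hn)).imp fun _ ha => ha.mono hΓ0
  refine ⟨fun n => if n ∈ (Term.app f ls).vars then σ' n else acc n, fun i => ?_,
    hT.subst fun n hn => ?_⟩
  · rw [hσ' i]
    exact Term.subst_congr fun n hn => (if_pos (Term.mem_vars_app.2 ⟨i, hn⟩)).symm
  · split_ifs with hl
    · obtain ⟨i, hi⟩ := Term.mem_vars_app.1 hl
      have hvar : ls i = .var n := hGrow _ hR n hl hn f ls rfl i hi
      have := hts i
      rw [hσ' i, hvar, satArg, if_pos hn] at this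
      exact this.mono hΓ0
    · exact hacc n hn

lemma sound_satStep (hL : Rg.LeftLinear) (hGrow : Rg.Growing) {Γ : Set (TARule G arG Q)}
    (hΓ0 : C.Γ0 ⊆ Γ) (hΓ : C.Sound Γ) : C.Sound (satStep Rg C.enc C.Qstates Γ) := by
  intro v q h
  induction h with
  | @app f vs qs q _ hrule ih =>
      choose ts hvts hts using ih
      have hargs : RewritesStar Rg.rules (.app f vs) (.app f ts) := RewritesStar.app hvts
      rcases hrule with hold | ⟨f', ls, r, θ, q', hR, hθ, hT, hρ⟩
      · obtain ⟨t, hst, ht⟩ := hΓ (.app (fun i => (hts i).mono hΓ0) hold)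
        exact ⟨t, hargs.trans hst, ht⟩
      · obtain ⟨rfl⟩ := congrArg Sigma.fst hρ
        obtain ⟨rfl, rfl⟩ := TARule.eq_of_mk_eq hρ
        obtain ⟨σ, hσ, hr⟩ := C.exists_subst_of_satStep_rule hL hGrow hΓ0 hR hθ hT hts
        obtain ⟨t, hst, ht⟩ := hΓ hr
        refine ⟨t, (hargs.tail ⟨[], _, r, σ, hR, ?_, rfl⟩).trans hst, ht⟩
        simp [Term.subtermAt, Term.subst, ← hσ]

lemma sound_Γsat (hL : Rg.LeftLinear) (hGrow : Rg.Growing) : C.Sound C.Γsat := by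
  have hiter : ∀ n, C.Sound (C.satIter n) := by
    intro n
    induction n with
    | zero => exact fun v q h => ⟨v, .refl, h⟩
    | succ n ih =>
        rw [satIter, Function.iterate_succ_apply']
        exact C.sound_satStep hL hGrow (C.Γ0_subset_satIter n) ih
  intro v q h
  obtain ⟨n, hn⟩ := Reaches.exists_of_iUnion C.satIter_mono h
  exact hiter n hn

end CSetup

namespace CrsSetup

variable {F : Type} [Fintype F] {ar : F → ℕ} {Q : Type} [Fintype Q] {R S : TRS F ar}
  (C : CrsSetup Q R S)

lemma bmatch_subset_Γ' : BMatch R.liftC C.enc2 ⊆ C.Γ' :=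
  fun _ h => .inl (.inr h)

lemma bprop_subset_Γ' : BProp C.enc ⊆ C.Γ' :=
  fun _ h => .inl (.inl (Set.mem_iUnion.2 ⟨0, .inr (.inr h)⟩))

lemma reaches_Γsat_of_reaches_Γ' {t : Term (F ⊕ F) (arC ar)} {q : Q} (h : Reaches C.Γ' t q)
    (hq : q ∈ C.Qstates) : Reaches C.Γsat t q := by
  refine h.restrict (fun ρ hρ hρq => ?_) hq
  rcases hρ with (hsat | ⟨g, ws, hws, rfl⟩) | hE
  · exact ⟨hsat, (C.states_mem_Qstates_of_mem_Γsat hsat).2⟩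
  · refine absurd (Set.eq_empty_iff_forall_notMem.1 C.hfresh2 _) (not_not.2 ⟨?_, hρq⟩)
    exact ⟨_, ⟨stPattern_mem_BStateSet hws, fun h => nomatch h⟩, rfl⟩
  · exact absurd (Set.eq_empty_iff_forall_notMem.1 C.hEfresh _)
      (not_not.2 ⟨⟨ρ, hE, .inl rfl⟩, .inl hρq⟩)

end CrsSetup

section PowersetAutomaton

variable {F : Type} {ar : F → ℕ} {Q : Type} {Rg : TRS (F ⊕ F) (arC ar)}
  {Γ' : Set (TARule (F ⊕ F) (arC ar) Q)} {enc enc2 : Term (F ⊕ F) (arC ar) → Q}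

lemma of_mem_DTransRS {f : F} {SPs : Fin (ar f) → Set Q × Set Q} {SP : Set Q × Set Q}
    (h : ⟨f, SPs, SP⟩ ∈ DTransRS Rg Γ' enc2) :
    SP.1 = oneStep Γ' (Sum.inl f) (fun i => (SPs i).1) ∧
      (∀ i, ∀ q ∈ (SPs i).2, ∃ q' ∈ SP.2,
        q' ∈ oneStep Γ' (Sum.inl f) fun (j : Fin (ar f)) => if j = i then {q} else (SPs j).1) ∧
      (LhsMatch Rg enc2 (Sum.inl f) (fun i => (SPs i).1) →
        ∃ q ∈ SP.2, q ∈ oneStep Γ' (Sum.inr f) fun i => (SPs i).1) := by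
  obtain ⟨f', SPs', P1, P2, -, hcover, hP2, hρ⟩ := h
  obtain ⟨rfl⟩ := congrArg Sigma.fst hρ
  obtain ⟨rfl, rfl⟩ := TARule.eq_of_mk_eq hρ
  refine ⟨rfl, fun i q hq => ?_, fun hm => ?_⟩
  · obtain ⟨q', hq'1, hq'2⟩ := hcover i q hq
    exact ⟨q', .inl hq'1, hq'2⟩
  · rcases hP2 with ⟨-, ⟨q, hq⟩, hsub⟩ | ⟨hnm, -⟩
    · exact ⟨q, .inr hq, hsub hq⟩
    · exact absurd hm hnm

lemma LhsMatch.mono {g : F ⊕ F} {Ss Ss' : Fin (arC ar g) → Set Q}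
    (h : LhsMatch Rg enc2 g Ss) (hS : ∀ i, Ss i ⊆ Ss' i) : LhsMatch Rg enc2 g Ss' :=
  let ⟨ls, r, hlr, hls⟩ := h
  ⟨ls, r, hlr, fun i => hS i (hls i)⟩

lemma fst_eq_dn_of_reaches_DTransRS {s : Term F ar} {SP : Set Q × Set Q}
    (h : Reaches (DTransRS Rg Γ' enc2) s SP) : SP.1 = dn Γ' (liftC s) := by
  induction h with
  | app _ hr ih =>
      rw [(of_mem_DTransRS hr).1, liftC_app, dn_app]
      exact congrArg _ (funext ih)

lemma lhsMatch_of_isRedex {R : TRS F ar} (hM : BMatch R.liftC enc2 ⊆ Γ')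
    (hP : BProp enc ⊆ Γ') (hx : enc2 (.var 0) = enc (.var 0)) {f : F}
    {ss : Fin (ar f) → Term F ar} (hu : R.IsRedex (.app f ss)) (hg : (Term.app f ss).Ground) :
    LhsMatch R.liftC enc2 (Sum.inl f) fun i => dn Γ' (liftC (ss i)) := by
  obtain ⟨⟨l, r⟩, hlr, σ, hsub⟩ := hu
  cases l with
  | var m => exact absurd rfl (R.lhs_not_var _ hlr m)
  | app g ls =>
      simp only [Term.subst, Term.app.injEq] at hsub
      obtain ⟨rfl, hss⟩ := hsub
      cases eq_of_heq hss
      have hmem : (Term.app (Sum.inl f) fun i => liftC (ls i), liftC r) ∈ R.liftC.rules :=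
        ⟨_, hlr, rfl⟩
      refine ⟨_, _, hmem, fun (i : Fin (ar f)) => ?_⟩
      have hgi : (liftC ((ls i).subst σ)).Ground := (Term.ground_app_iff.1 hg i).relabel
      rw [liftC_subst] at hgi
      show Reaches Γ' (liftC ((ls i).subst σ)) _
      rw [liftC_subst]
      exact reaches_stPattern_subst hM hP hx (SR_lhs_arg hmem i) hgi

lemma exists_reaches_replaceAt_circTm {R : TRS F ar} (hM : BMatch R.liftC enc2 ⊆ Γ')
    (hP : BProp enc ⊆ Γ') (hx : enc2 (.var 0) = enc (.var 0)) {s : Term F ar}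
    {SP : Set Q × Set Q} (h : Reaches (DTransRS R.liftC Γ' enc2) s SP) {p : List ℕ}
    {u : Term F ar} (hpu : s.subtermAt p = some u) (hu : R.IsRedex u) :
    ∃ v, (liftC s).replaceAt p (circTm u) = some v ∧ ∃ q ∈ SP.2, Reaches Γ' v q := by
  induction h generalizing p with
  | @app f ss SPs SP hss hr ih =>
      obtain ⟨-, hcover, hroot⟩ := of_mem_DTransRS hr
      have hdn i : (SPs i).1 = dn Γ' (liftC (ss i)) := fst_eq_dn_of_reaches_DTransRS (hss i)
      simp only [hdn] at hcover
      rcases p with _ | ⟨i, p⟩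
      · simp only [Term.subtermAt, Option.some.injEq] at hpu
        subst hpu
        obtain ⟨q, hqP, qs, hqs, hq⟩ := hroot <|
          (lhsMatch_of_isRedex hM hP hx hu (Reaches.app hss hr).ground).mono
            fun i => (hdn i).symm.subset
        exact ⟨_, rfl, q, hqP, .app (fun i => (hdn i).subset (hqs i)) hq⟩
      · obtain ⟨hi, hpu⟩ := Term.exists_lt_of_subtermAt_cons hpu
        obtain ⟨v, hv, q, hqP, hq⟩ := ih ⟨i, hi⟩ hpu
        obtain ⟨q', hq'P, hq'⟩ := hcover ⟨i, hi⟩ q hqP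
        refine ⟨_, ?_, q', hq'P, reaches_app_update hq' hq⟩
        rw [liftC_app, Term.replaceAt_cons_of_lt (f := Sum.inl f) _ hi]
        exact congrArg (Option.map _) hv

end PowersetAutomaton

theorem statement17_general {F : Type} [Fintype F] {ar : F → ℕ} {Q : Type} [Fintype Q]
    (R S : TRS F ar) (hRlin : R.IsLinear) (hRgrow : R.Growing)
    (C : CrsSetup Q R S)
    (s : Term F ar) (Sst P : Set Q)
    (h : Reaches (DTransRS R.liftC C.Γ' C.enc2) s (Sst, P))
    (hPf : P ⊆ C.A.final)
    (p : List ℕ) (u : Term F ar) (hpu : s.subtermAt p = some u) (hu : R.IsRedex u) :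
    ∃ v, (liftC s).replaceAt p (circTm u) = some v ∧
      ∃ t ∈ TRS.RSset S.circ, RewritesStar R.liftC.rules v t := by
  obtain ⟨v, hv, q, hqP, hq⟩ :=
    exists_reaches_replaceAt_circTm C.bmatch_subset_Γ' C.bprop_subset_Γ' C.hx h hpu hu
  have hqA : q ∈ C.QA := C.hfinal (hPf hqP)
  obtain ⟨t, hvt, ht⟩ := C.sound_Γsat hRlin.1.relabel hRgrow.relabel
    (C.reaches_Γsat_of_reaches_Γ' hq (.inl hqA))
  refine ⟨v, hv, t, ?_, hvt⟩
  rw [C.hT]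
  exact ⟨ht.ground, q, hPf hqP, (C.reaches_of_reaches_Γ0 ht).1 hqA⟩

/-- Let `ℛ` and `𝒮` be linear growing TRSs over `𝓕` and `𝒟'(ℛ,𝒮)`
the powerset-pair automaton built from `𝒞'_{RS_{𝒮°}}(ℛ)`.  If `s →_{Γ_{𝒟'}}* [S,P]`
with `P ⊆ Q_f`, then for every redex position `p` of `s`, `s[(s|_p)°]_p` rewrites in
`ℛ` to a root-stable term of `𝒮°`. -/
theorem statement17 {F : Type} [Fintype F] {ar : F → ℕ} {Q : Type} [Fintype Q]
    (R S : TRS F ar) (hRlin : R.IsLinear) (hRgrow : R.Growing)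
    (hSlin : S.IsLinear) (hSgrow : S.Growing)
    (C : CrsSetup Q R S)
    (s : Term F ar) (hs : s.Ground) (Sst P : Set Q)
    (h : Reaches (DTransRS R.liftC C.Γ' C.enc2) s (Sst, P))
    (hPf : P ⊆ C.A.final)
    (p : List ℕ) (u : Term F ar) (hpu : s.subtermAt p = some u) (hu : R.IsRedex u) :
    ∃ v, (liftC s).replaceAt p (circTm u) = some v ∧
      ∃ t ∈ TRS.RSset S.circ, RewritesStar R.liftC.rules v t :=
  statement17_general R S hRlin hRgrow C s Sst P h hPf p u hpu hu
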